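/- For every k ≥ 1 there exists a polynomial p ∈ ℚ[x] of degree 3k with leading coefficient 1/(k!·3^k) such that LS(n+k, n) = p(n) for all integers n ≥ 1. -/

import Mathlib

/-!
Write `taylor 1 S - S` for the forward difference `S(X + 1) - S(X)` of a polynomial. Over a
field of characteristic zero every polynomial `r` of degree `d` is the forward difference of a
polynomial of degree `d + 1` with leading coefficient `lc r / (d + 1)`, and that one can be
normalised to vanish at `0`.

The sequence `f_k(n) = LS (n + k) n` satisfies `f_{k+1}(0) = 0` and
`f_{k+1}(n + 1) - f_{k+1}(n) = (n + 1) (n + 2) f_k(n + 1)`, so by induction on `k`, starting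
from `f_0 = 1`, `f_{k+1}` is the normalised antiderivative of a polynomial of degree `3k + 2`
with the leading coefficient of `f_k`: the degree grows by `3` and the leading coefficient is
divided by `3 (k + 1)`.
-/

open Polynomial

/-- Legendre-Stirling numbers of the second kind. -/
def LS : ℕ → ℕ → ℕ
  | 0, 0 => 1
  | 0, _ + 1 => 0
  | _ + 1, 0 => 0
  | n + 1, k + 1 => LS n k + (k + 1) * (k + 2) * LS n (k + 1)

namespace Polynomial

section CommRing

variable {R : Type*} [CommRing R]

theorem coeff_taylor_one_of_natDegree_le {S : R[X]} {n : ℕ} (h : S.natDegree ≤ n + 1) :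
    (taylor 1 S).coeff n = S.coeff n + (n + 1) * S.coeff (n + 1) := by
  have h1 : (hasseDeriv n S).natDegree ≤ 1 := (natDegree_hasseDeriv_le S n).trans (by omega)
  rw [taylor_coeff, eq_X_add_C_of_natDegree_le_one h1, eval_add, eval_mul, eval_C, eval_C,
    eval_X, mul_one, hasseDeriv_coeff, hasseDeriv_coeff, zero_add, Nat.choose_self, add_comm 1 n,
    Nat.choose_succ_self_right]
  push_cast
  ring

theorem natDegree_taylor_one_sub_le {S : R[X]} {n : ℕ} (h : S.natDegree ≤ n + 1) :
    (taylor 1 S - S).natDegree ≤ n := by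
  refine natDegree_le_iff_coeff_eq_zero.mpr fun m hm => ?_
  have hm : n < m := by exact_mod_cast hm
  rw [coeff_sub, coeff_taylor_one_of_natDegree_le (h.trans (by omega)),
    coeff_eq_zero_of_natDegree_lt (h.trans_lt (by omega : n + 1 < m + 1))]
  ring

theorem coeff_taylor_one_sub {S : R[X]} {n : ℕ} (h : S.natDegree ≤ n + 1) :
    (taylor 1 S - S).coeff n = (n + 1) * S.coeff (n + 1) := by
  rw [coeff_sub, coeff_taylor_one_of_natDegree_le h]
  ring

theorem eval_taylor_one_sub (S : R[X]) (x : R) :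
    (taylor 1 S - S).eval x = S.eval (x + 1) - S.eval x := by
  rw [eval_sub, taylor_eval]

variable [IsDomain R] [CharZero R]

theorem natDegree_taylor_one_sub {S : R[X]} {n : ℕ} (h : S.natDegree = n + 1) :
    (taylor 1 S - S).natDegree = n := by
  refine (natDegree_taylor_one_sub_le h.le).antisymm (le_natDegree_of_ne_zero ?_)
  rw [coeff_taylor_one_sub h.le, ← h]
  exact mul_ne_zero (by exact_mod_cast n.succ_ne_zero)
    (leadingCoeff_ne_zero.mpr (ne_zero_of_natDegree_gt (n := n) (by omega)))

theorem leadingCoeff_taylor_one_sub {S : R[X]} {n : ℕ} (h : S.natDegree = n + 1) :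
    (taylor 1 S - S).leadingCoeff = (n + 1) * S.leadingCoeff := by
  rw [leadingCoeff, natDegree_taylor_one_sub h, coeff_taylor_one_sub h.le, ← h, leadingCoeff]

end CommRing

section Field

variable {K : Type*} [Field K] [CharZero K]

theorem exists_taylor_one_sub_eq (r : K[X]) : ∃ S : K[X], taylor 1 S - S = r := by
  induction r using degree_lt_wf.induction with
  | _ r ih =>
  by_cases hr : r = 0
  · exact ⟨0, by simp [hr]⟩
  set g : K[X] := C (r.leadingCoeff / (r.natDegree + 1)) * X ^ (r.natDegree + 1)
  have hc : r.leadingCoeff / (r.natDegree + 1) ≠ 0 :=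
    div_ne_zero (leadingCoeff_ne_zero.mpr hr) (by exact_mod_cast r.natDegree.succ_ne_zero)
  have hg : g.natDegree = r.natDegree + 1 := natDegree_C_mul_X_pow _ _ hc
  have hlc : r.leadingCoeff = (taylor 1 g - g).leadingCoeff := by
    rw [leadingCoeff_taylor_one_sub hg, leadingCoeff_C_mul_X_pow]
    field_simp
  have hΔg : taylor 1 g - g ≠ 0 := leadingCoeff_ne_zero.mp (hlc ▸ leadingCoeff_ne_zero.mpr hr)
  obtain ⟨S, hS⟩ := ih _ (degree_sub_lt_left (by rw [degree_eq_natDegree hr,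
    degree_eq_natDegree hΔg, natDegree_taylor_one_sub hg]) hr hlc)
  exact ⟨S + g, by rw [map_add]; linear_combination hS⟩

theorem exists_taylor_one_sub_eq_of_ne_zero {r : K[X]} (hr : r ≠ 0) :
    ∃ S : K[X], S.eval 0 = 0 ∧ taylor 1 S - S = r ∧ S.natDegree = r.natDegree + 1 ∧
      S.leadingCoeff = r.leadingCoeff / (r.natDegree + 1) := by
  obtain ⟨S₀, hS₀⟩ := exists_taylor_one_sub_eq r
  set S := S₀ - C (S₀.eval 0)
  have hS : taylor 1 S - S = r := by simp only [S, map_sub, taylor_C]; linear_combination hS₀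
  obtain ⟨m, hm⟩ : ∃ m, S.natDegree = m + 1 := by
    refine Nat.exists_eq_succ_of_ne_zero fun h0 => hr ?_
    rw [← hS, eq_C_of_natDegree_eq_zero h0, taylor_C, sub_self]
  have hdeg := natDegree_taylor_one_sub hm
  have hlc := leadingCoeff_taylor_one_sub hm
  rw [hS] at hdeg hlc
  refine ⟨S, by simp [S], hS, by rw [hm, hdeg], ?_⟩
  rw [hlc, hdeg]
  field_simp

end Field

end Polynomial

theorem LS_eq_zero_of_lt : ∀ {n k : ℕ}, n < k → LS n k = 0
  | 0, _ + 1, _ => rfl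
  | n + 1, k + 1, h => by
    rw [LS, LS_eq_zero_of_lt (by omega : n < k), LS_eq_zero_of_lt (by omega : n < k + 1),
      mul_zero, add_zero]

theorem LS_self : ∀ n : ℕ, LS n n = 1
  | 0 => rfl
  | n + 1 => by rw [LS, LS_self n, LS_eq_zero_of_lt n.lt_succ_self, mul_zero, add_zero]

theorem LS_succ_add_succ (n k : ℕ) :
    LS (n + 1 + (k + 1)) (n + 1) =
      LS (n + (k + 1)) n + (n + 1) * (n + 2) * LS (n + 1 + k) (n + 1) := by
  rw [show n + 1 + (k + 1) = n + (k + 1) + 1 by omega, LS, show n + (k + 1) = n + 1 + k by omega]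

theorem exists_poly_eval_eq_LS_add_self (k : ℕ) :
    ∃ p : ℚ[X], p.natDegree = 3 * k ∧ p.leadingCoeff = 1 / ((Nat.factorial k : ℚ) * 3 ^ k) ∧
      ∀ n : ℕ, p.eval (n : ℚ) = LS (n + k) n := by
  induction k with
  | zero => exact ⟨1, by simp, by simp, fun n => by simp [LS_self]⟩
  | succ k ih =>
  obtain ⟨p, hdeg, hlc, hev⟩ := ih
  have hp : p ≠ 0 := leadingCoeff_ne_zero.mp (by rw [hlc]; positivity)
  have hq : IsMonicOfDegree (X * (X + C 1) : ℚ[X]) 2 :=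
    (isMonicOfDegree_X ℚ).mul (isMonicOfDegree_X_add_one 1)
  set r := taylor 1 (X * (X + C 1) * p)
  have hrdeg : r.natDegree = 3 * k + 2 := by
    rw [natDegree_taylor, natDegree_mul hq.ne_zero hp, hq.natDegree_eq, hdeg]
    ring
  have hrlc : r.leadingCoeff = p.leadingCoeff := by
    rw [leadingCoeff_taylor, leadingCoeff_mul, hq.leadingCoeff_eq, one_mul]
  have hr : r ≠ 0 := leadingCoeff_ne_zero.mp (by rw [hrlc, hlc]; positivity)
  obtain ⟨S, hS0, hS, hSdeg, hSlc⟩ := exists_taylor_one_sub_eq_of_ne_zero hr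
  refine ⟨S, by rw [hSdeg, hrdeg]; ring, ?_, ?_⟩
  · rw [hSlc, hrlc, hlc, hrdeg, Nat.factorial_succ]
    push_cast
    field_simp
    ring
  · intro n
    induction n with
    | zero => simpa [LS] using hS0
    | succ n ihn =>
    have hstep := congrArg (eval (n : ℚ)) hS
    rw [eval_taylor_one_sub] at hstep
    simp only [r, taylor_eval, eval_mul, eval_X, eval_add, eval_C] at hstep
    rw [LS_succ_add_succ]
    push_cast
    rw [← hev (n + 1)]
    push_cast
    linear_combination hstep + ihn

theorem LS_polynomiality_general (k : ℕ) :
    ∃ p : Polynomial ℚ, p.degree = 3 * k ∧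
      p.leadingCoeff = 1 / ((Nat.factorial k : ℚ) * 3 ^ k) ∧
      ∀ n : ℕ, 1 ≤ n → p.eval (n : ℚ) = LS (n + k) n := by
  obtain ⟨p, hdeg, hlc, hev⟩ := exists_poly_eval_eq_LS_add_self k
  have hp : p ≠ 0 := leadingCoeff_ne_zero.mp (by rw [hlc]; positivity)
  exact ⟨p, by rw [degree_eq_natDegree hp, hdeg]; push_cast; rfl, hlc, fun n _ => hev n⟩

theorem LS_polynomiality (k : ℕ) (hk : 1 ≤ k) :
    ∃ p : Polynomial ℚ, p.degree = 3 * k ∧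
      p.leadingCoeff = 1 / ((Nat.factorial k : ℚ) * 3 ^ k) ∧
      ∀ n : ℕ, 1 ≤ n → p.eval (n : ℚ) = LS (n + k) n :=
  LS_polynomiality_general k
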